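/- arXiv:2005.08611 — 2 statements merged into one kernel-verified Lean document; each statement's English description precedes it below -/
import Mathlib

section
/- Let (𝒵, μ) be a σ-finite measure space, let N ⊆ ℝ be open, and let f : ℝ × 𝒵 → [0,∞) be measurable such that for μ-a.e. z the map α ↦ f(α,z) is continuous on N. Let η₀ be a measure on ℝ with η₀(U) > 0 for every nonempty open U ⊆ N, fix q ∈ N, τ ∈ (0,1), and a constant D > 0. Then there is no pair (s, c) of a measurable s : 𝒵 → ℝ satisfying the dominance condition on N (for every α ∈ N there is an open neighborhood Γ ⊆ N with z ↦ sup_{β∈Γ} f(β,z) measurable and ∫ |s(z)| sup_{β∈Γ} f(β,z) dμ(z) < ∞) and a constant c ∈ ℝ such that −(1(α < q) − τ)/D − c = ∫ s(z) f(α,z) dμ(z) for η₀-a.e. α ∈ N. -/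
/-!
The left- and right-hand values `-(1 - τ)/D - c` and `τ/D - c` of the quantile influence
function differ at `q`, whereas `α ↦ ∫ s z * f α z ∂μ` is continuous at `q` by dominated
convergence. Since `η₀` charges every nonempty open subset of `N`, a representation holding
`η₀`-a.e. on `N` must hold on a set accumulating at `q` from each side, so continuity forces
both one-sided values to equal the value of the integral at `q`.
-/

open MeasureTheory Set Filter Topology
open scoped ENNReal

section Continuity

variable {X Z : Type*} [TopologicalSpace X] [FirstCountableTopology X] [MeasurableSpace Z]
  {μ : Measure Z}

theorem continuousAt_integral_mul_of_lintegral_iSup_lt_top {f : X → Z → ℝ} {s : Z → ℝ}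
    {α₀ : X} {Γ : Set X} (hΓ : Γ ∈ 𝓝 α₀) (hs : Measurable s) (hf_meas : ∀ α, Measurable (f α))
    (hf_nonneg : ∀ α z, 0 ≤ f α z)
    (hS_meas : Measurable fun z => ⨆ β ∈ Γ, ENNReal.ofReal (f β z))
    (hS_fin : ∫⁻ z, (‖s z‖₊ : ℝ≥0∞) * ⨆ β ∈ Γ, ENNReal.ofReal (f β z) ∂μ < ⊤)
    (hf_cont : ∀ᵐ z ∂μ, ContinuousAt (fun α => f α z) α₀) :
    ContinuousAt (fun α => ∫ z, s z * f α z ∂μ) α₀ := by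
  set P : Z → ℝ≥0∞ := fun z => (‖s z‖₊ : ℝ≥0∞) * ⨆ β ∈ Γ, ENNReal.ofReal (f β z)
  have hP_meas : AEMeasurable P μ := (hs.nnnorm.coe_nnreal_ennreal.mul hS_meas).aemeasurable
  refine continuousAt_of_dominated (bound := fun z => (P z).toReal)
    (.of_forall fun α => (hs.mul (hf_meas α)).aestronglyMeasurable) ?_
    (integrable_toReal_of_lintegral_ne_top hP_meas hS_fin.ne)
    (hf_cont.mono fun z hz => continuousAt_const.mul hz)
  filter_upwards [hΓ] with α hα
  filter_upwards [ae_lt_top' hP_meas hS_fin.ne] with z hz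
  rw [← ENNReal.ofReal_le_iff_le_toReal hz.ne, ofReal_norm, enorm_mul,
    Real.enorm_of_nonneg (hf_nonneg α z), enorm_eq_nnnorm]
  exact mul_le_mul_right (le_biSup (fun β => ENNReal.ofReal (f β z)) hα) _

end Continuity

theorem ContinuousAt.eq_of_ae_eq_of_mem_closure {X Y : Type*} [TopologicalSpace X]
    [MeasurableSpace X] [TopologicalSpace Y] [T1Space Y] {η : Measure X} {N U : Set X}
    (hη : ∀ V : Set X, IsOpen V → V.Nonempty → V ⊆ N → 0 < η V) (hU : IsOpen U) (hUN : U ⊆ N)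
    {g : X → Y} {q : X} {a : Y} (hg : ContinuousAt g q) (hqU : q ∈ closure U)
    (hae : ∀ᵐ α ∂η, α ∈ U → g α = a) : g q = a := by
  by_contra hne
  obtain ⟨V, hVg, hVo, hqV⟩ := _root_.eventually_nhds_iff.mp (hg.eventually_ne hne)
  have hVU_null : η (V ∩ U) = 0 :=
    measure_mono_null (t := {α | ¬(α ∈ U → g α = a)})
      (fun α hα hga => hVg α hα.1 (hga hα.2)) (ae_iff.mp hae)
  exact (hη _ (hVo.inter hU) (mem_closure_iff.mp hqU V hVo hqV)
    (inter_subset_right.trans hUN)).ne' hVU_null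

theorem stmt_2_general {Z : Type*} [MeasurableSpace Z]
    (μ : Measure Z)
    (N : Set ℝ) (hN : IsOpen N)
    (f : ℝ → Z → ℝ)
    (hf_meas : Measurable (Function.uncurry f))
    (hf_nonneg : ∀ α z, 0 ≤ f α z)
    (hf_cont : ∀ᵐ z ∂μ, ContinuousOn (fun α => f α z) N)
    (η₀ : Measure ℝ)
    (hη : ∀ U : Set ℝ, IsOpen U → U.Nonempty → U ⊆ N → 0 < η₀ U)
    (q : ℝ) (hq : q ∈ N) (τ : ℝ) (D : ℝ) (hD : 0 < D) :
    ¬ ∃ (s : Z → ℝ) (c : ℝ), Measurable s ∧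
      (∀ α ∈ N, ∃ Γ : Set ℝ,
        IsOpen Γ ∧ α ∈ Γ ∧ Γ ⊆ N ∧
        Measurable (fun z => ⨆ β ∈ Γ, ENNReal.ofReal (f β z)) ∧
        ∫⁻ z, (‖s z‖₊ : ℝ≥0∞) * ⨆ β ∈ Γ, ENNReal.ofReal (f β z) ∂μ < ⊤) ∧
      (∀ᵐ α ∂η₀, α ∈ N →
        -((if α < q then (1 : ℝ) else 0) - τ) / D - c = ∫ z, s z * f α z ∂μ) := by
  rintro ⟨s, c, hs, hdom, hae⟩
  obtain ⟨Γ, hΓo, hqΓ, -, hS_meas, hS_fin⟩ := hdom q hq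
  have hcont := continuousAt_integral_mul_of_lintegral_iSup_lt_top (hΓo.mem_nhds hqΓ) hs
    (fun _ => hf_meas.of_uncurry_left) hf_nonneg hS_meas hS_fin
    (hf_cont.mono fun z hz => hz.continuousAt (hN.mem_nhds hq))
  have one_sided : ∀ (U : Set ℝ) (b : ℝ), IsOpen U → q ∈ closure U →
      (∀ α ∈ U, (if α < q then (1 : ℝ) else 0) = b) →
      ∫ z, s z * f q z ∂μ = -(b - τ) / D - c := fun U b hU hqU hb =>
    hcont.eq_of_ae_eq_of_mem_closure hη (hN.inter hU) inter_subset_left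
      (hN.inter_closure ⟨hq, hqU⟩)
      (hae.mono fun α h hα => by rw [← h hα.1, hb α hα.2])
  have hleft := one_sided (Iio q) 1 isOpen_Iio (by simp [closure_Iio]) fun α hα => if_pos hα
  have hright := one_sided (Ioi q) 0 isOpen_Ioi (by simp [closure_Ioi])
    fun α hα => if_neg (not_lt.2 (le_of_lt hα))
  have hjump := hleft.symm.trans hright
  field_simp at hjump
  linarith

/-- irregularity of quantiles of nonparametric unobserved heterogeneity:
no influence function `s` satisfying the dominance condition can represent the quantile
influence function `−(1(α < q) − τ)/D` (up to a constant) as `∫ s z * f α z dμ`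
η₀-a.e. on `N`. -/
theorem stmt_2 {Z : Type*} [MeasurableSpace Z]
    (μ : Measure Z) [SigmaFinite μ]
    (N : Set ℝ) (hN : IsOpen N)
    (f : ℝ → Z → ℝ)
    (hf_meas : Measurable (Function.uncurry f))
    (hf_nonneg : ∀ α z, 0 ≤ f α z)
    (hf_cont : ∀ᵐ z ∂μ, ContinuousOn (fun α => f α z) N)
    (η₀ : Measure ℝ)
    (hη : ∀ U : Set ℝ, IsOpen U → U.Nonempty → U ⊆ N → 0 < η₀ U)
    (q : ℝ) (hq : q ∈ N) (τ : ℝ) (hτ : τ ∈ Set.Ioo (0 : ℝ) 1) (D : ℝ) (hD : 0 < D) :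
    ¬ ∃ (s : Z → ℝ) (c : ℝ), Measurable s ∧
      (∀ α ∈ N, ∃ Γ : Set ℝ,
        IsOpen Γ ∧ α ∈ Γ ∧ Γ ⊆ N ∧
        Measurable (fun z => ⨆ β ∈ Γ, ENNReal.ofReal (f β z)) ∧
        ∫⁻ z, (‖s z‖₊ : ℝ≥0∞) * ⨆ β ∈ Γ, ENNReal.ofReal (f β z) ∂μ < ⊤) ∧
      (∀ᵐ α ∂η₀, α ∈ N →
        -((if α < q then (1 : ℝ) else 0) - τ) / D - c = ∫ z, s z * f α z ∂μ) :=
  stmt_2_general μ N hN f hf_meas hf_nonneg hf_cont η₀ hη q hq τ D hD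
end

section
/- Let d ≥ 2, let σ be the uniform spherical probability measure on S^{d−1}, let ν be a finite measure on S^{d−1} absolutely continuous with respect to σ, and let s ∈ L¹(ν). Let η₀ be a measure on S^{d−1}, let B ⊆ S^{d−1} be Borel, and suppose there exists β ∈ S^{d−1} such that for every open neighborhood U of β in S^{d−1} one has η₀(U ∩ B) > 0 and η₀(U \ B) > 0. Then there is no constant c ∈ ℝ such that ∫_{S^{d−1}} 1(⟨x,α⟩ ≥ 0) s(x) dν(x) = 1_B(α) − c for η₀-a.e. α ∈ S^{d−1}. -/
/-! The map `α ↦ ∫ 1(⟪x, α⟫ ≥ 0) s(x) dν(x)` is continuous (by dominated convergence) at every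
`α` whose orthogonal hyperplane is `ν`-null, whereas near an `η₀`-essential boundary point of `B`
any `η₀`-a.e. version of `1_B - c` takes both values `1 - c` and `-c`.

Hyperplanes are `σ`-null, hence `ν`-null, by induction on the dimension of a proper subspace `K`:
distinct images of `K` under linear isometries meet in a subspace of smaller dimension, so they
are pairwise `σ`-a.e. disjoint and all have the measure of `K`. If that measure were positive,
there would be only finitely many such images; but they cover the space (isometries act
transitively on each sphere), and no finite family of proper subspaces does. -/

open MeasureTheory Set Module Function Topology
open scoped RealInnerProductSpace

section
variable {E : Type*} [NormedAddCommGroup E] [InnerProductSpace ℝ E]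

theorem Submodule.iUnion_map_linearIsometryEquiv_eq_univ {K : Submodule ℝ E} (hK : K ≠ ⊥) :
    ⋃ R : E ≃ₗᵢ[ℝ] E, (K.map (R : E →ₗ[ℝ] E) : Set E) = univ := by
  refine eq_univ_of_forall fun x => mem_iUnion.2 ?_
  obtain ⟨v, hvK, hv0⟩ := K.ne_bot_iff.1 hK
  set w := (‖x‖ / ‖v‖) • v
  have hw : ‖w‖ = ‖x‖ := by simp [w, norm_smul, hv0]
  exact ⟨reflection (ℝ ∙ (w - x))ᗮ, w, K.smul_mem _ hvK, reflection_sub hw⟩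

theorem Submodule.finrank_inf_lt_of_ne [FiniteDimensional ℝ E] {L L' : Submodule ℝ E}
    (hne : L ≠ L') (hrank : finrank ℝ L = finrank ℝ L') :
    finrank ℝ ↥(L ⊓ L') < finrank ℝ L := by
  refine finrank_lt_finrank_of_lt (inf_lt_left.2 fun hle => hne ?_)
  exact eq_of_le_of_finrank_eq hle hrank

variable [MeasurableSpace E] [BorelSpace E]

theorem measure_image_linearIsometryEquiv {μ : Measure E}
    (hμ : ∀ R : E ≃ₗᵢ[ℝ] E, μ.map R = μ) (R : E ≃ₗᵢ[ℝ] E) (s : Set E) : μ (R '' s) = μ s := by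
  have h := R.toHomeomorph.toMeasurableEquiv.map_apply (μ := μ) (R '' s)
  simp only [Homeomorph.toMeasurableEquiv_coe, LinearIsometryEquiv.coe_toHomeomorph] at h
  rwa [hμ, R.injective.preimage_image] at h

theorem measure_submodule_eq_zero_of_ne_top [FiniteDimensional ℝ E] {μ : Measure E}
    [IsFiniteMeasure μ] (hμ : ∀ R : E ≃ₗᵢ[ℝ] E, μ.map R = μ) (h0 : μ {0} = 0)
    {K : Submodule ℝ E} (hK : K ≠ ⊤) : μ K = 0 := by
  induction hk : finrank ℝ K using Nat.strong_induction_on generalizing K with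
  | _ k ih =>
  subst hk
  rcases eq_or_ne K ⊥ with rfl | hK0
  · simpa using h0
  by_contra hpos
  let orbit := range fun R : E ≃ₗᵢ[ℝ] E => K.map (R : E →ₗ[ℝ] E)
  have horbit : ∀ L ∈ orbit, μ L = μ K ∧ finrank ℝ L = finrank ℝ K := by
    rintro _ ⟨R, rfl⟩
    exact ⟨by rw [Submodule.map_coe]; exact measure_image_linearIsometryEquiv hμ R K,
      LinearEquiv.finrank_map_eq R.toLinearEquiv K⟩
  have hdisj : Pairwise (AEDisjoint μ on fun L : orbit => (L : Set E)) := by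
    rintro ⟨L, hL⟩ ⟨L', hL'⟩ hne
    have hlt : finrank ℝ ↥(L ⊓ L') < finrank ℝ K := (horbit L hL).2 ▸
      L.finrank_inf_lt_of_ne (fun h => hne (Subtype.ext h))
        ((horbit L hL).2.trans (horbit L' hL').2.symm)
    refine ih _ hlt (fun htop => ?_) rfl
    rw [htop, finrank_top] at hlt
    exact hlt.not_ge K.finrank_le
  have hfinite : orbit.Finite := by
    have := Measure.finite_const_le_meas_of_disjoint_iUnion₀ μ (pos_iff_ne_zero.2 hpos)
      (fun L : orbit => (L : Submodule ℝ E).closed_of_finiteDimensional.nullMeasurableSet)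
      hdisj (measure_ne_top μ _)
    simp only [fun L : orbit => (horbit L L.2).1, le_refl, ofPred_true] at this
    exact finite_coe_iff.1 (finite_univ_iff.1 this)
  have := hfinite.to_subtype
  have hcover : ⋃ L : orbit, (L : Set E) = univ := by
    rw [← biUnion_eq_iUnion orbit fun L _ => (L : Set E), biUnion_range]
    exact K.iUnion_map_linearIsometryEquiv_eq_univ hK0
  obtain ⟨L, hL⟩ := Subspace.exists_eq_top_of_iUnion_eq_univ hcover
  have hrank := (horbit L L.2).2
  rw [hL, finrank_top] at hrank
  exact hK (Submodule.eq_top_of_finrank_eq hrank.symm)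

theorem measure_setOf_inner_eq_zero [FiniteDimensional ℝ E] {μ : Measure E} [IsFiniteMeasure μ]
    (hμ : ∀ R : E ≃ₗᵢ[ℝ] E, μ.map R = μ) (h0 : μ {0} = 0) {β : E} (hβ : β ≠ 0) :
    μ {x | ⟪x, β⟫ = 0} = 0 := by
  have hK : (ℝ ∙ β)ᗮ ≠ ⊤ := by
    rwa [Ne, Submodule.orthogonal_eq_top_iff, Submodule.span_singleton_eq_bot]
  convert measure_submodule_eq_zero_of_ne_top hμ h0 hK using 2
  ext x
  exact Submodule.mem_orthogonal_singleton_iff_inner_left.symm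

end

theorem continuousAt_integral_ite_inner_nonneg {E : Type*} [NormedAddCommGroup E]
    [InnerProductSpace ℝ E] [MeasurableSpace E] [OpensMeasurableSpace E] {ν : Measure E}
    {s : E → ℝ} (hs : Integrable s ν) {β : E} (hβ : ν {x | ⟪x, β⟫ = 0} = 0) :
    ContinuousAt (fun α => ∫ x, (if 0 ≤ ⟪x, α⟫ then s x else 0) ∂ν) β := by
  refine continuousAt_of_dominated (bound := fun x => ‖s x‖)
    (Filter.Eventually.of_forall fun α => ?_)
    (Filter.Eventually.of_forall fun α => ae_of_all _ fun x => ?_) hs.norm ?_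
  · exact hs.1.indicator (s := {x | 0 ≤ ⟪x, α⟫})
      (isClosed_le continuous_const (continuous_id.inner continuous_const)).measurableSet
  · split_ifs <;> simp
  · filter_upwards [measure_eq_zero_iff_ae_notMem.1 hβ] with x hx
    have hc : ContinuousAt (fun α => ⟪x, α⟫) β :=
      (continuous_const.inner continuous_id).continuousAt
    have hlocal : ∀ᶠ α in 𝓝 β, (0 ≤ ⟪x, α⟫ ↔ 0 ≤ ⟪x, β⟫) := by
      rcases lt_or_gt_of_ne hx with hneg | hpos
      · filter_upwards [hc.eventually_lt continuousAt_const hneg] with α hα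
        simp only [hα.not_ge, hneg.not_ge]
      · filter_upwards [continuousAt_const.eventually_lt hc hpos] with α hα
        simp only [hα.le, hpos.le]
    exact (continuousAt_const (y := if 0 ≤ ⟪x, β⟫ then s x else 0)).congr
      (hlocal.mono fun α h => by simp only [h])

theorem not_continuousAt_of_ae_eq_indicator_sub {X : Type*} [TopologicalSpace X]
    [MeasurableSpace X] {η : Measure X} {S B : Set X} {β : X}
    (hβ : ∀ V, IsOpen V → β ∈ V → 0 < η (V ∩ S ∩ B) ∧ 0 < η ((V ∩ S) \ B))
    {f : X → ℝ} {c : ℝ} (hf : ∀ᵐ α ∂η, α ∈ S → f α = B.indicator (fun _ => 1) α - c) :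
    ¬ ContinuousAt f β := by
  intro hcont
  obtain ⟨V, hVf, hVopen, hβV⟩ :=
    mem_nhds_iff.1 (hcont (Metric.ball_mem_nhds (f β) one_half_pos))
  have exists_good (A : Set X) (hA : 0 < η A) :
      ∃ α ∈ A, α ∈ S → f α = B.indicator (fun _ => 1) α - c :=
    nonempty_of_measure_ne_zero (measure_inter_conull hf ▸ hA.ne')
  obtain ⟨α₁, ⟨⟨hα₁V, hα₁S⟩, hα₁B⟩, hα₁⟩ := exists_good _ (hβ V hVopen hβV).1
  obtain ⟨α₂, ⟨⟨hα₂V, hα₂S⟩, hα₂B⟩, hα₂⟩ := exists_good _ (hβ V hVopen hβV).2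
  have h₁ : f α₁ = 1 - c := by rw [hα₁ hα₁S, indicator_of_mem hα₁B]
  have h₂ : f α₂ = 0 - c := by rw [hα₂ hα₂S, indicator_of_notMem hα₂B]
  have hclose₁ : dist (1 - c) (f β) < 1 / 2 := h₁ ▸ hVf hα₁V
  have hclose₂ : dist (0 - c) (f β) < 1 / 2 := h₂ ▸ hVf hα₂V
  have : (1 : ℝ) ≤ dist (1 - c) (f β) + dist (0 - c) (f β) :=
    calc (1 : ℝ) = dist (1 - c) (0 - c) := by simp
      _ ≤ _ := dist_triangle_right _ _ _
  linarith

theorem stmt_8_general {d : ℕ}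
    (σ : Measure (EuclideanSpace ℝ (Fin d))) [IsProbabilityMeasure σ]
    (hσsphere : σ (Metric.sphere (0 : EuclideanSpace ℝ (Fin d)) 1)ᶜ = 0)
    (hσinv : ∀ R : EuclideanSpace ℝ (Fin d) ≃ₗᵢ[ℝ] EuclideanSpace ℝ (Fin d),
      Measure.map R σ = σ)
    (ν : Measure (EuclideanSpace ℝ (Fin d)))
    (hνσ : ν ≪ σ)
    (s : EuclideanSpace ℝ (Fin d) → ℝ) (hs : Integrable s ν)
    (η₀ : Measure (EuclideanSpace ℝ (Fin d)))
    (B : Set (EuclideanSpace ℝ (Fin d)))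
    (β : EuclideanSpace ℝ (Fin d)) (hβ : β ∈ Metric.sphere (0 : EuclideanSpace ℝ (Fin d)) 1)
    (hcharge : ∀ V : Set (EuclideanSpace ℝ (Fin d)), IsOpen V → β ∈ V →
      0 < η₀ (V ∩ Metric.sphere (0 : EuclideanSpace ℝ (Fin d)) 1 ∩ B) ∧
      0 < η₀ ((V ∩ Metric.sphere (0 : EuclideanSpace ℝ (Fin d)) 1) \ B)) :
    ¬ ∃ c : ℝ, ∀ᵐ α ∂η₀, α ∈ Metric.sphere (0 : EuclideanSpace ℝ (Fin d)) 1 →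
      ∫ x, (if 0 ≤ ⟪x, α⟫ then s x else 0) ∂ν = B.indicator (fun _ => (1 : ℝ)) α - c := by
  rintro ⟨c, hc⟩
  have hσ0 : σ {0} = 0 := measure_mono_null (by simp) hσsphere
  have hβ0 : β ≠ 0 := ne_zero_of_mem_sphere one_ne_zero ⟨β, hβ⟩
  exact not_continuousAt_of_ae_eq_indicator_sub hcharge hc
    (continuousAt_integral_ite_inner_nonneg hs (hνσ (measure_setOf_inner_eq_zero hσinv hσ0 hβ0)))

/-- irregular identification in the binary choice RC model: the necessary
representation `∫ 1(⟨x,α⟩ ≥ 0) s(x) dν(x) = 1_B(α) − c` (η₀-a.e. on the sphere) fails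
whenever `B` has an η₀-essential boundary point `β` on the sphere. -/
theorem stmt_8 {d : ℕ} (hd : 2 ≤ d)
    (σ : Measure (EuclideanSpace ℝ (Fin d))) [IsProbabilityMeasure σ]
    (hσsphere : σ (Metric.sphere (0 : EuclideanSpace ℝ (Fin d)) 1)ᶜ = 0)
    (hσinv : ∀ R : EuclideanSpace ℝ (Fin d) ≃ₗᵢ[ℝ] EuclideanSpace ℝ (Fin d),
      Measure.map R σ = σ)
    (ν : Measure (EuclideanSpace ℝ (Fin d))) [IsFiniteMeasure ν]
    (hνσ : ν ≪ σ)
    (s : EuclideanSpace ℝ (Fin d) → ℝ) (hs : Integrable s ν)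
    (η₀ : Measure (EuclideanSpace ℝ (Fin d)))
    (B : Set (EuclideanSpace ℝ (Fin d))) (hBmeas : MeasurableSet B)
    (hBsub : B ⊆ Metric.sphere (0 : EuclideanSpace ℝ (Fin d)) 1)
    (β : EuclideanSpace ℝ (Fin d)) (hβ : β ∈ Metric.sphere (0 : EuclideanSpace ℝ (Fin d)) 1)
    (hcharge : ∀ V : Set (EuclideanSpace ℝ (Fin d)), IsOpen V → β ∈ V →
      0 < η₀ (V ∩ Metric.sphere (0 : EuclideanSpace ℝ (Fin d)) 1 ∩ B) ∧
      0 < η₀ ((V ∩ Metric.sphere (0 : EuclideanSpace ℝ (Fin d)) 1) \ B)) :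
    ¬ ∃ c : ℝ, ∀ᵐ α ∂η₀, α ∈ Metric.sphere (0 : EuclideanSpace ℝ (Fin d)) 1 →
      ∫ x, (if 0 ≤ ⟪x, α⟫ then s x else 0) ∂ν = B.indicator (fun _ => (1 : ℝ)) α - c :=
  stmt_8_general σ hσsphere hσinv ν hνσ s hs η₀ B β hβ hcharge
end
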